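/- arXiv:1403.7239 — 4 statements merged into one kernel-verified Lean document; each statement's English description precedes it below -/
import Mathlib

section
/- Let N ≥ 1 and let P1, P3 be N×N complex matrices with P1 ≠ P3 satisfying (P3−P1)† · (P3−P1) = (‖P3−P1‖_F² / N) · I_N, and let P2, P4 be arbitrary N×N complex matrices. Set M2 = (N / ‖P3−P1‖_F²) · (P3−P1)† · (P3·P4 − P1·P2) and M1 = P1·P2 − P1·M2. Then the block matrix [[I_N, P1],[I_N, P3]] is invertible and [[I_N, P1],[I_N, P3]]^{−1} · G(P1,P2,P3,P4) = [[I_N, 0_N, M1],[0_N, I_N, M2]] · Ā, where the right-hand left factor is the indicated 2N×3N block matrix. -/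
/-! With `D = P3 - P1`, the hypothesis says `D† D = (‖D‖²/N) I`, so `D` is invertible
with inverse `(N/‖D‖²) D†`, and `M2 = D⁻¹ (P3 P4 - P1 P2)`. The Schur complement of the
block `I` in `[[I, P1], [I, P3]]` is `D`, which gives invertibility, and multiplying out
`[[I, P1], [I, P3]] · [[I, 0, M1], [0, I, M2]] = [[I, P1, M1 + P1 M2], [I, P3, M1 + P3 M2]]`
recovers `[[I, P1, P1 P2], [I, P3, P3 P4]]` since `M1 + P3 M2 = P1 P2 + D M2`. -/

open Matrix

noncomputable section

/-- Squared Frobenius norm of a complex matrix. -/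
def frobSq {m n : ℕ} (X : Matrix (Fin m) (Fin n) ℂ) : ℝ :=
  ∑ i, ∑ j, Complex.normSq (X i j)

/-- The 3N × (3N-1) bidiagonal matrix `Ā` of the paper (0-indexed):
`-1` on the diagonal, `1` on the subdiagonal, zeros elsewhere. -/
def Abar (N : ℕ) : Matrix (Fin (3 * N)) (Fin (3 * N - 1)) ℂ :=
  Matrix.of fun i j =>
    if i.val = j.val then -1 else if i.val = j.val + 1 then 1 else 0

/-- 2N × 3N block matrix `[[A, B, C], [D, E, F]]` built out of N × N blocks. -/
def blk23 {N : ℕ} (A B C D E F : Matrix (Fin N) (Fin N) ℂ) :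
    Matrix (Fin (2 * N)) (Fin (3 * N)) ℂ :=
  Matrix.of fun i j =>
    if hi : i.val < N then
      if hj : j.val < N then A ⟨i.val, hi⟩ ⟨j.val, hj⟩
      else if hj2 : j.val < 2 * N then B ⟨i.val, hi⟩ ⟨j.val - N, by omega⟩
      else C ⟨i.val, hi⟩ ⟨j.val - 2 * N, by have := j.isLt; omega⟩
    else
      if hj : j.val < N then D ⟨i.val - N, by have := i.isLt; omega⟩ ⟨j.val, hj⟩
      else if hj2 : j.val < 2 * N then
        E ⟨i.val - N, by have := i.isLt; omega⟩ ⟨j.val - N, by omega⟩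
      else F ⟨i.val - N, by have := i.isLt; omega⟩ ⟨j.val - 2 * N, by have := j.isLt; omega⟩

/-- 2N × 2N block matrix `[[A, B], [C, D]]` built out of N × N blocks. -/
def blk22 {N : ℕ} (A B C D : Matrix (Fin N) (Fin N) ℂ) :
    Matrix (Fin (2 * N)) (Fin (2 * N)) ℂ :=
  Matrix.of fun i j =>
    if hi : i.val < N then
      if hj : j.val < N then A ⟨i.val, hi⟩ ⟨j.val, hj⟩
      else B ⟨i.val, hi⟩ ⟨j.val - N, by have := j.isLt; omega⟩
    else
      if hj : j.val < N then C ⟨i.val - N, by have := i.isLt; omega⟩ ⟨j.val, hj⟩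
      else D ⟨i.val - N, by have := i.isLt; omega⟩ ⟨j.val - N, by have := j.isLt; omega⟩

/-- The 2N × (3N-1) matrix `G(P1, P2, P3, P4) = [[I, P1, P1·P2], [I, P3, P3·P4]] · Ā`. -/
def Gmat {N : ℕ} (P1 P2 P3 P4 : Matrix (Fin N) (Fin N) ℂ) :
    Matrix (Fin (2 * N)) (Fin (3 * N - 1)) ℂ :=
  blk23 1 P1 (P1 * P2) 1 P3 (P3 * P4) * Abar N

/-- The 1 × N all-ones row vector `w`. -/
def wrow (N : ℕ) : Matrix (Fin 1) (Fin N) ℂ :=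
  Matrix.of fun _ _ => 1

open scoped ComplexOrder

def finSumFinEquivTwoMul (N : ℕ) : Fin N ⊕ Fin N ≃ Fin (2 * N) :=
  finSumFinEquiv.trans (finCongr (two_mul N).symm)

def finSumFinSumFinEquivThreeMul (N : ℕ) : Fin N ⊕ (Fin N ⊕ Fin N) ≃ Fin (3 * N) :=
  ((Equiv.refl _).sumCongr finSumFinEquiv).trans (finSumFinEquiv.trans (finCongr (by ring)))

theorem fromCols_add_fromCols {m n₁ n₂ R : Type*} [Add R] (A₁ B₁ : Matrix m n₁ R)
    (A₂ B₂ : Matrix m n₂ R) : fromCols A₁ A₂ + fromCols B₁ B₂ = fromCols (A₁ + B₁) (A₂ + B₂) := by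
  ext i (j | j) <;> rfl

section Blocks

variable {N : ℕ}

theorem submatrix_blk22 (A B C D : Matrix (Fin N) (Fin N) ℂ) :
    (blk22 A B C D).submatrix (finSumFinEquivTwoMul N) (finSumFinEquivTwoMul N) =
      fromBlocks A B C D := by
  ext (a | a) (b | b) <;> simp [blk22, finSumFinEquivTwoMul]

theorem submatrix_blk23 (A B C D E F : Matrix (Fin N) (Fin N) ℂ) :
    (blk23 A B C D E F).submatrix (finSumFinEquivTwoMul N) (finSumFinSumFinEquivThreeMul N) =
      fromBlocks A (fromCols B C) D (fromCols E F) := by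
  ext (a | a) (b | b | b) <;>
    simp [blk23, finSumFinEquivTwoMul, finSumFinSumFinEquivThreeMul] <;> grind

theorem blk22_eq_submatrix_fromBlocks (A B C D : Matrix (Fin N) (Fin N) ℂ) :
    blk22 A B C D =
      (fromBlocks A B C D).submatrix (finSumFinEquivTwoMul N).symm
        (finSumFinEquivTwoMul N).symm := by
  simp [← submatrix_blk22]

theorem blk23_eq_submatrix_fromBlocks (A B C D E F : Matrix (Fin N) (Fin N) ℂ) :
    blk23 A B C D E F =
      (fromBlocks A (fromCols B C) D (fromCols E F)).submatrix (finSumFinEquivTwoMul N).symm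
        (finSumFinSumFinEquivThreeMul N).symm := by
  simp [← submatrix_blk23]

theorem blk22_mul_blk23 (A B C D A' B' C' D' E' F' : Matrix (Fin N) (Fin N) ℂ) :
    blk22 A B C D * blk23 A' B' C' D' E' F' =
      blk23 (A * A' + B * D') (A * B' + B * E') (A * C' + B * F')
        (C * A' + D * D') (C * B' + D * E') (C * C' + D * F') := by
  rw [blk22_eq_submatrix_fromBlocks, blk23_eq_submatrix_fromBlocks,
    blk23_eq_submatrix_fromBlocks, submatrix_mul_equiv, fromBlocks_multiply]
  simp only [mul_fromCols, fromCols_add_fromCols]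

theorem det_blk22_one (B C D : Matrix (Fin N) (Fin N) ℂ) :
    (blk22 1 B C D).det = (D - C * B).det := by
  rw [blk22_eq_submatrix_fromBlocks, det_submatrix_equiv_self, det_fromBlocks_one₁₁]

end Blocks

theorem mul_smul_inv_eq_one_of_mul_eq_smul_one {n K : Type*} [Fintype n] [DecidableEq n] [Field K]
    {A B : Matrix n n K} {r : K} (hr : r ≠ 0) (h : B * A = r • 1) : A * (r⁻¹ • B) = 1 :=
  mul_eq_one_comm.mp (by rw [smul_mul_assoc, h, smul_smul, inv_mul_cancel₀ hr, one_smul])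

theorem stmt3_general (N : ℕ) (P1 P2 P3 P4 : Matrix (Fin N) (Fin N) ℂ)
    (hne : P1 ≠ P3)
    (hcond : (P3 - P1)ᴴ * (P3 - P1) = ((frobSq (P3 - P1) / (N : ℝ) : ℝ) : ℂ) • 1) :
    IsUnit (blk22 1 P1 1 P3) ∧
      (blk22 1 P1 1 P3)⁻¹ * Gmat P1 P2 P3 P4 =
        blk23 1 0
            (P1 * P2 -
              P1 * (((N : ℝ) / frobSq (P3 - P1) : ℝ) • ((P3 - P1)ᴴ * (P3 * P4 - P1 * P2))))
          0 1
            (((N : ℝ) / frobSq (P3 - P1) : ℝ) • ((P3 - P1)ᴴ * (P3 * P4 - P1 * P2))) *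
          Abar N := by
  set r : ℂ := ((frobSq (P3 - P1) / (N : ℝ) : ℝ) : ℂ)
  set M2 := ((N : ℝ) / frobSq (P3 - P1) : ℝ) • ((P3 - P1)ᴴ * (P3 * P4 - P1 * P2))
  have hr : r ≠ 0 := by
    rintro hr
    rw [hr, zero_smul, conjTranspose_mul_self_eq_zero, sub_eq_zero] at hcond
    exact hne hcond.symm
  have hinv : (P3 - P1) * (r⁻¹ • (P3 - P1)ᴴ) = 1 :=
    mul_smul_inv_eq_one_of_mul_eq_smul_one hr hcond
  have hM2 : M2 = (r⁻¹ • (P3 - P1)ᴴ) * (P3 * P4 - P1 * P2) := by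
    rw [smul_mul_assoc, ← Complex.ofReal_inv, inv_div, Complex.coe_smul]
  have hdet : IsUnit (blk22 1 P1 1 P3).det := by
    rw [det_blk22_one, one_mul]
    exact isUnit_det_of_right_inverse hinv
  have hcorner : 1 * (P1 * P2 - P1 * M2) + P3 * M2 = P3 * P4 := by
    rw [one_mul, sub_add_eq_add_sub, add_sub_assoc, ← sub_mul, hM2, ← Matrix.mul_assoc, hinv,
      one_mul, add_sub_cancel]
  have hfactor : blk22 1 P1 1 P3 * blk23 1 0 (P1 * P2 - P1 * M2) 0 1 M2 =
      blk23 1 P1 (P1 * P2) 1 P3 (P3 * P4) := by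
    rw [blk22_mul_blk23, hcorner]
    simp
  refine ⟨(isUnit_iff_isUnit_det _).mpr hdet, ?_⟩
  rw [Gmat, ← hfactor, Matrix.mul_assoc, nonsing_inv_mul_cancel_left _ _ hdet]

theorem stmt3 (N : ℕ) (hN : 1 ≤ N) (P1 P2 P3 P4 : Matrix (Fin N) (Fin N) ℂ)
    (hne : P1 ≠ P3)
    (hcond : (P3 - P1)ᴴ * (P3 - P1) = ((frobSq (P3 - P1) / (N : ℝ) : ℝ) : ℂ) • 1) :
    IsUnit (blk22 1 P1 1 P3) ∧
      (blk22 1 P1 1 P3)⁻¹ * Gmat P1 P2 P3 P4 =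
        blk23 1 0
            (P1 * P2 -
              P1 * (((N : ℝ) / frobSq (P3 - P1) : ℝ) • ((P3 - P1)ᴴ * (P3 * P4 - P1 * P2))))
          0 1
            (((N : ℝ) / frobSq (P3 - P1) : ℝ) • ((P3 - P1)ᴴ * (P3 * P4 - P1 * P2))) *
          Abar N :=
  stmt3_general N P1 P2 P3 P4 hne hcond
end
end

section
/- Let N ≥ 1 and let β be a 2N×N complex matrix. Define the 2N×(3N−1) complex matrix M by: M(1,k) = −1 for 1 ≤ k ≤ 2N−1 and M(1, 2N−1+j) = β(1,j) − 1 for 1 ≤ j ≤ N; and for 2 ≤ i ≤ 2N, M(i,k) = 1 if k = i−1 and 0 otherwise for 1 ≤ k ≤ 2N−1, and M(i, 2N−1+j) = β(i,j) for 1 ≤ j ≤ N. Then M has rank 2N (full row rank) if and only if there exists j ∈ {1,…,N} with Σ_{i=1}^{2N} β(i,j) ≠ 1. -/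
open Matrix

noncomputable section

/-- The 2N × (3N-1) matrix `M` built from a 2N × N matrix `β` (0-indexed version of the
1-indexed matrix in the paper): the first row is `(-1, …, -1, β(1,1)-1, …, β(1,N)-1)`,
and for `i ≥ 2` row `i` is `(0, …, 0, 1, 0, …, 0, β(i,1), …, β(i,N))` with the `1` in
column `i - 1`. -/
def Mmat {N : ℕ} (β : Matrix (Fin (2 * N)) (Fin N) ℂ) :
    Matrix (Fin (2 * N)) (Fin (3 * N - 1)) ℂ :=
  Matrix.of fun i k =>
    if hk : k.val < 2 * N - 1 then
      if i.val = 0 then -1 else if k.val + 1 = i.val then 1 else 0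
    else
      if i.val = 0 then β i ⟨k.val - (2 * N - 1), by have := k.isLt; omega⟩ - 1
      else β i ⟨k.val - (2 * N - 1), by have := k.isLt; omega⟩

lemma vecMul_Mmat_lt {N : ℕ} (β : Matrix (Fin (2 * N)) (Fin N) ℂ) (x : Fin (2 * N) → ℂ)
    (k : Fin (3 * N - 1)) (hk : k.val < 2 * N - 1) :
    (x ᵥ* Mmat β) k = -x ⟨0, by omega⟩ + x ⟨k.val + 1, by omega⟩ := by
  have h2N : 0 < 2 * N := by omega
  simp only [vecMul, dotProduct, Mmat, of_apply, dif_pos hk]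
  have : ∀ i : Fin (2 * N),
      x i * (if i.val = 0 then (-1 : ℂ) else if k.val + 1 = i.val then 1 else 0)
      = (if i = ⟨0, h2N⟩ then -x i else 0) + (if i = ⟨k.val + 1, by omega⟩ then x i else 0) := by
    intro i
    by_cases h0 : i.val = 0
    · have hne : ¬ (k.val + 1 = i.val) := by omega
      simp [h0, Fin.ext_iff, hne]
    · by_cases h1 : k.val + 1 = i.val
      · simp [h0, h1, Fin.ext_iff]
      · have h1' : ¬ (i.val = k.val + 1) := by omega
        simp [h0, h1', Fin.ext_iff]
        tauto
  rw [Finset.sum_congr rfl fun i _ => this i, Finset.sum_add_distrib]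
  simp

lemma vecMul_Mmat_ge {N : ℕ} (hN : 1 ≤ N) (β : Matrix (Fin (2 * N)) (Fin N) ℂ)
    (x : Fin (2 * N) → ℂ) (j : Fin N) :
    (x ᵥ* Mmat β) ⟨2 * N - 1 + j.val, by have := j.isLt; omega⟩
      = (∑ i, x i * β i j) - x ⟨0, by omega⟩ := by
  have h2N : 0 < 2 * N := by omega
  have hnk : ¬ ((2 * N - 1 + j.val) < 2 * N - 1) := by omega
  simp only [vecMul, dotProduct, Mmat, of_apply, dif_neg hnk]
  have hj : (⟨2 * N - 1 + j.val - (2 * N - 1), by have := j.isLt; omega⟩ : Fin N) = j := by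
    simp [Fin.ext_iff]
  rw [hj]
  have : ∀ i : Fin (2 * N),
      x i * (if i.val = 0 then β i j - 1 else β i j)
      = x i * β i j - (if i = ⟨0, h2N⟩ then x i else 0) := by
    intro i
    by_cases h0 : i.val = 0
    · simp [h0, Fin.ext_iff]; ring
    · simp [h0, Fin.ext_iff]
  rw [Finset.sum_congr rfl fun i _ => this i, Finset.sum_sub_distrib]
  simp

theorem rank_eq_card_rows_iff (m n : ℕ) (A : Matrix (Fin m) (Fin n) ℂ) :
    A.rank = m ↔ ∀ x : Fin m → ℂ, x ᵥ* A = 0 → x = 0 := by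
  rw [← A.rank_transpose]
  have h1 : Aᵀ.rank = Module.finrank ℂ (LinearMap.range Aᵀ.mulVecLin) := rfl
  have h2 := LinearMap.finrank_range_add_finrank_ker Aᵀ.mulVecLin
  have h3 : Module.finrank ℂ (Fin m → ℂ) = m := by simp
  rw [← h1, h3] at h2
  rw [h1]
  have key : (∀ x : Fin m → ℂ, x ᵥ* A = 0 → x = 0) ↔
      LinearMap.ker Aᵀ.mulVecLin = ⊥ := by
    rw [LinearMap.ker_eq_bot']
    constructor
    · intro h x hx
      exact h x (by simpa [Matrix.mulVecLin_apply, Matrix.mulVec_transpose] using hx)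
    · intro h x hx
      exact h x (by simpa [Matrix.mulVecLin_apply, Matrix.mulVec_transpose] using hx)
  rw [key]
  constructor
  · intro h
    exact Submodule.finrank_eq_zero.mp (by omega)
  · intro h
    rw [h, finrank_bot] at h2
    omega

theorem stmt5 (N : ℕ) (hN : 1 ≤ N) (β : Matrix (Fin (2 * N)) (Fin N) ℂ) :
    (Mmat β).rank = 2 * N ↔ ∃ j : Fin N, (∑ i, β i j) ≠ 1 := by
  have h2N : 0 < 2 * N := by omega
  rw [rank_eq_card_rows_iff]
  constructor
  · intro h
    by_contra hno
    push_neg at hno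
    have h1 : (fun _ : Fin (2 * N) => (1 : ℂ)) ᵥ* Mmat β = 0 := by
      funext k
      by_cases hk : k.val < 2 * N - 1
      · rw [vecMul_Mmat_lt β _ k hk]; simp
      · have hj : k.val - (2 * N - 1) < N := by have := k.isLt; omega
        have hkeq : k = ⟨2 * N - 1 + (⟨k.val - (2 * N - 1), hj⟩ : Fin N).val,
            by have := k.isLt; omega⟩ := by
          ext
          show k.val = 2 * N - 1 + (k.val - (2 * N - 1))
          omega
        rw [hkeq, vecMul_Mmat_ge hN β _ ⟨k.val - (2 * N - 1), hj⟩]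
        simp [hno]
    have := congrFun (h _ h1) ⟨0, h2N⟩
    simp at this
  · rintro ⟨j, hj⟩ x hx
    have hx0 : ∀ i : Fin (2 * N), x i = x ⟨0, h2N⟩ := by
      intro i
      by_cases h0 : i.val = 0
      · congr 1; exact Fin.ext h0
      · have hk : i.val - 1 < 3 * N - 1 := by have := i.isLt; omega
        have hk' : (⟨i.val - 1, hk⟩ : Fin (3 * N - 1)).val < 2 * N - 1 := by
          show i.val - 1 < 2 * N - 1
          have := i.isLt; omega
        have key := vecMul_Mmat_lt β x ⟨i.val - 1, hk⟩ hk'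
        rw [hx] at key
        have key' : (0 : ℂ) = -x ⟨0, h2N⟩ +
            x ⟨(⟨i.val - 1, hk⟩ : Fin (3 * N - 1)).val + 1, by omega⟩ := key
        have hi : (⟨(⟨i.val - 1, hk⟩ : Fin (3 * N - 1)).val + 1,
            by omega⟩ : Fin (2 * N)) = i := by
          ext
          show i.val - 1 + 1 = i.val
          omega
        rw [hi] at key'
        linear_combination -key'
    have hcol := vecMul_Mmat_ge hN β x j
    rw [hx] at hcol
    have hcol' : (0 : ℂ) = (∑ i, x i * β i j) - x ⟨0, h2N⟩ := hcol
    have hsum : (∑ i, x i * β i j) = x ⟨0, h2N⟩ * ∑ i, β i j := by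
      rw [Finset.mul_sum]
      exact Finset.sum_congr rfl fun i _ => by rw [hx0 i]
    rw [hsum] at hcol'
    have hmul : x ⟨0, h2N⟩ * ((∑ i, β i j) - 1) = 0 := by linear_combination -hcol'
    have hx0z : x ⟨0, h2N⟩ = 0 := by
      rcases mul_eq_zero.mp hmul with h | h
      · exact h
      · exact absurd (sub_eq_zero.mp h) hj
    funext i
    rw [hx0 i, hx0z]
    rfl
end
end

section
/- Let N ≥ 1, let P1, P3 be N×N complex matrices with P1 ≠ P3 satisfying (P3−P1)† · (P3−P1) = (‖P3−P1‖_F² / N) · I_N, and let P2, P4 be arbitrary N×N complex matrices. Then the 2N×(3N−1) matrix G(P1,P2,P3,P4) has rank 2N (full row rank) if and only if w · [P1·P2 + N·(I_N − P1) · ((P3−P1)† / ‖P3−P1‖_F²) · (P3·P4 − P1·P2)] ≠ w, where w is the 1×N all-ones row vector. -/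
open Matrix

noncomputable section

/-!
Write `G = M Ā` with `M = [[I, P1, P1 P2], [I, P3, P3 P4]]`. A row vector `x` annihilates `G`
iff `x M` is constant, because the left kernel of the difference matrix `Ā` consists of the
constant vectors. For `x = (a, b)` the value `0` forces `b (P3 - P1) = 0`, hence `x = 0`;
after scaling, the value `1` forces `a = 1 - b` and `b (P3 - P1) = 1 (1 - P1)`, i.e.
`b = 1 (1 - P1) T` with `T = (P3 - P1)⁻¹`, and the last block then becomes
`w (P1 P2 + (1 - P1) T (P3 P4 - P1 P2)) = w`. The hypothesis on `(P3 - P1)ᴴ (P3 - P1)` says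
that `T = (N / ‖P3 - P1‖_F²) (P3 - P1)ᴴ`.
-/

namespace Matrix

variable {K m n : Type*} [Field K] [Fintype m]

theorem rank_eq_card_iff_vecMul_eq_zero [Fintype n] (A : Matrix m n K) :
    A.rank = Fintype.card m ↔ ∀ x, x ᵥ* A = 0 → x = 0 := by
  rw [rank_eq_finrank_span_row, eq_comm, ← Set.finrank,
    ← linearIndependent_iff_card_eq_finrank_span, Fintype.linearIndependent_iff]
  simp only [vecMul_eq_sum, funext_iff, Pi.zero_apply]
  rfl

theorem exists_ne_zero_vecMul_eq_const_iff [Nonempty n] {M : Matrix m n K}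
    (h0 : ∀ x, x ᵥ* M = 0 → x = 0) :
    (∃ x ≠ 0, ∃ t, x ᵥ* M = fun _ => t) ↔ ∃ x, x ᵥ* M = 1 := by
  constructor
  · rintro ⟨x, hx, t, hxt⟩
    have ht : t ≠ 0 := by
      rintro rfl
      exact hx (h0 x hxt)
    refine ⟨t⁻¹ • x, ?_⟩
    ext
    simp [smul_vecMul, hxt, ht]
  · rintro ⟨x, hx⟩
    refine ⟨x, ?_, 1, hx⟩
    rintro rfl
    simp at hx

theorem vecMul_eq_iff_eq_vecMul_of_mul_eq_one [DecidableEq m] {S T : Matrix m m K}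
    (hT : T * S = 1) {b c : m → K} : b ᵥ* S = c ↔ b = c ᵥ* T := by
  constructor
  · rintro rfl
    rw [vecMul_vecMul, mul_eq_one_comm.mp hT, vecMul_one]
  · rintro rfl
    rw [vecMul_vecMul, hT, vecMul_one]

end Matrix

theorem frobSq_pos {m n : ℕ} {X : Matrix (Fin m) (Fin n) ℂ} (hX : X ≠ 0) : 0 < frobSq X := by
  obtain ⟨i, j, hij⟩ : ∃ i j, X i j ≠ 0 := by
    by_contra! h
    exact hX (ext h)
  exact Finset.sum_pos' (fun _ _ => Finset.sum_nonneg fun _ _ => Complex.normSq_nonneg _)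
    ⟨i, Finset.mem_univ _, Finset.sum_pos' (fun _ _ => Complex.normSq_nonneg _)
      ⟨j, Finset.mem_univ _, Complex.normSq_pos.mpr hij⟩⟩

theorem vecMul_Abar_apply {N : ℕ} (y : Fin (3 * N) → ℂ) (j : Fin (3 * N - 1)) :
    (y ᵥ* Abar N) j = y ⟨j + 1, by omega⟩ - y ⟨j, by omega⟩ := by
  rw [vecMul, dotProduct,
    Fintype.sum_eq_add ⟨j, by omega⟩ ⟨j + 1, by omega⟩ (by simp [Fin.ext_iff])]
  · simp [Abar, neg_add_eq_sub]
  · rintro i ⟨h1, h2⟩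
    rw [Fin.ne_iff_vne] at h1 h2
    simp [Abar, h1, h2]

theorem vecMul_Abar_eq_zero_iff {N : ℕ} (y : Fin (3 * N) → ℂ) :
    y ᵥ* Abar N = 0 ↔ ∃ t, y = fun _ => t := by
  constructor
  · intro h
    rcases N.eq_zero_or_pos with rfl | hN
    · exact ⟨0, funext fun i => i.elim0⟩
    have step (m : ℕ) (hm : m + 1 < 3 * N) : y ⟨m + 1, hm⟩ = y ⟨m, by omega⟩ := by
      simpa [vecMul_Abar_apply, sub_eq_zero] using congrFun h ⟨m, by omega⟩
    have hconst : ∀ m (hm : m < 3 * N), y ⟨m, hm⟩ = y ⟨0, by omega⟩ := by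
      intro m
      induction m with
      | zero => intro _; rfl
      | succ m ih => intro hm; rw [step m hm, ih]
    exact ⟨y ⟨0, by omega⟩, funext fun i => hconst i i.2⟩
  · rintro ⟨t, rfl⟩
    ext j
    simp [vecMul_Abar_apply]

theorem vecMul_submatrix_Abar_eq_zero_iff {N : ℕ} {ι : Type*} [Fintype ι]
    (e : ι ≃ Fin (3 * N)) (z : ι → ℂ) :
    z ᵥ* (Abar N).submatrix e id = 0 ↔ ∃ t, z = fun _ => t := by
  rw [submatrix_vecMul_equiv, Function.comp_id, vecMul_Abar_eq_zero_iff]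
  exact exists_congr fun t => Equiv.comp_symm_eq _ _ _

section Gblocks

variable {K ι : Type*} [Field K] [Fintype ι] [DecidableEq ι]

def Gblocks (P1 P2 P3 P4 : Matrix ι ι K) : Matrix (ι ⊕ ι) ((ι ⊕ ι) ⊕ ι) K :=
  fromRows (fromCols (fromCols 1 P1) (P1 * P2)) (fromCols (fromCols 1 P3) (P3 * P4))

variable {P1 P2 P3 P4 T : Matrix ι ι K}

theorem sumElim_vecMul_Gblocks (a b : ι → K) :
    Sum.elim a b ᵥ* Gblocks P1 P2 P3 P4 =
      Sum.elim (Sum.elim (a + b) (a ᵥ* P1 + b ᵥ* P3))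
        (a ᵥ* (P1 * P2) + b ᵥ* (P3 * P4)) := by
  simp only [Gblocks, sumElim_vecMul_fromRows, vecMul_fromCols, vecMul_one, Sum.elim_add_add]

theorem eq_zero_of_vecMul_Gblocks_eq_zero (hT : T * (P3 - P1) = 1) {x : ι ⊕ ι → K}
    (hx : x ᵥ* Gblocks P1 P2 P3 P4 = 0) : x = 0 := by
  rw [← Sum.elim_comp_inl_inr x, sumElim_vecMul_Gblocks, ← Sum.elim_zero_zero,
    ← Sum.elim_zero_zero, Sum.elim_eq_iff, Sum.elim_eq_iff] at hx
  obtain ⟨⟨hab, hP⟩, -⟩ := hx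
  rw [eq_neg_of_add_eq_zero_left hab, neg_vecMul] at hP
  have hb : x ∘ Sum.inr = 0 := by
    rw [← zero_vecMul T, ← vecMul_eq_iff_eq_vecMul_of_mul_eq_one hT, vecMul_sub]
    linear_combination hP
  rw [← Sum.elim_comp_inl_inr x, eq_neg_of_add_eq_zero_left hab, hb, neg_zero,
    Sum.elim_zero_zero]

theorem sumElim_vecMul_Gblocks_eq_one_iff (hT : T * (P3 - P1) = 1) (a b : ι → K) :
    Sum.elim a b ᵥ* Gblocks P1 P2 P3 P4 = 1 ↔
      a = 1 - b ∧ b = 1 ᵥ* ((1 - P1) * T) ∧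
        1 ᵥ* (P1 * P2 + (1 - P1) * T * (P3 * P4 - P1 * P2)) = 1 := by
  rw [sumElim_vecMul_Gblocks, ← Sum.elim_one_one, ← Sum.elim_one_one, Sum.elim_eq_iff,
    Sum.elim_eq_iff, and_assoc, ← eq_sub_iff_add_eq]
  refine and_congr_right fun ha => ?_
  subst ha
  have hb : (1 - b) ᵥ* P1 + b ᵥ* P3 = 1 ↔ b = 1 ᵥ* ((1 - P1) * T) := by
    rw [← vecMul_vecMul, ← vecMul_eq_iff_eq_vecMul_of_mul_eq_one hT]
    constructor <;> intro h <;> simp only [sub_vecMul, vecMul_sub, vecMul_one] at h ⊢ <;>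
      linear_combination h
  rw [hb]
  refine and_congr_right fun hb => ?_
  have hE : 1 ᵥ* (P1 * P2 + (1 - P1) * T * (P3 * P4 - P1 * P2)) =
      (1 - b) ᵥ* (P1 * P2) + b ᵥ* (P3 * P4) := by
    rw [vecMul_add, ← vecMul_vecMul _ ((1 - P1) * T), ← hb, sub_vecMul, vecMul_sub]
    abel
  rw [hE]

theorem exists_vecMul_Gblocks_eq_one_iff (hT : T * (P3 - P1) = 1) :
    (∃ x, x ᵥ* Gblocks P1 P2 P3 P4 = 1) ↔
      1 ᵥ* (P1 * P2 + (1 - P1) * T * (P3 * P4 - P1 * P2)) = 1 := by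
  constructor
  · rintro ⟨x, hx⟩
    rw [← Sum.elim_comp_inl_inr x, sumElim_vecMul_Gblocks_eq_one_iff hT] at hx
    exact hx.2.2
  · intro h
    exact ⟨Sum.elim _ _, (sumElim_vecMul_Gblocks_eq_one_iff hT _ _).mpr ⟨rfl, rfl, h⟩⟩

end Gblocks

def finSumFinTwoMul (N : ℕ) : Fin N ⊕ Fin N ≃ Fin (2 * N) :=
  finSumFinEquiv.trans (finCongr (two_mul N).symm)

def finSumFinThreeMul (N : ℕ) : (Fin N ⊕ Fin N) ⊕ Fin N ≃ Fin (3 * N) :=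
  (Equiv.sumCongr finSumFinEquiv (Equiv.refl _)).trans (finSumFinEquiv.trans (finCongr (by ring)))

theorem blk23_submatrix {N : ℕ} (A B C D E F : Matrix (Fin N) (Fin N) ℂ) :
    (blk23 A B C D E F).submatrix (finSumFinTwoMul N) (finSumFinThreeMul N) =
      fromRows (fromCols (fromCols A B) C) (fromCols (fromCols D E) F) := by
  ext (i | i) ((j | j) | j) <;>
    simp [blk23, finSumFinTwoMul, finSumFinThreeMul, two_mul, add_assoc, Nat.add_sub_add_left]

theorem Gmat_submatrix {N : ℕ} (P1 P2 P3 P4 : Matrix (Fin N) (Fin N) ℂ) :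
    (Gmat P1 P2 P3 P4).submatrix (finSumFinTwoMul N) id =
      Gblocks P1 P2 P3 P4 * (Abar N).submatrix (finSumFinThreeMul N) id := by
  rw [Gmat, Gblocks, ← blk23_submatrix, submatrix_mul_equiv]

theorem rank_Gmat_eq_iff {N : ℕ} [NeZero N] {P1 P2 P3 P4 T : Matrix (Fin N) (Fin N) ℂ}
    (hT : T * (P3 - P1) = 1) :
    (Gmat P1 P2 P3 P4).rank = 2 * N ↔
      1 ᵥ* (P1 * P2 + (1 - P1) * T * (P3 * P4 - P1 * P2)) ≠ 1 := by
  have hcard (r : ℕ) : r = 2 * N ↔ r = Fintype.card (Fin N ⊕ Fin N) := by simp [two_mul]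
  rw [← rank_submatrix _ (finSumFinTwoMul N) (Equiv.refl _), hcard,
    rank_eq_card_iff_vecMul_eq_zero, ne_eq, ← exists_vecMul_Gblocks_eq_one_iff hT,
    ← exists_ne_zero_vecMul_eq_const_iff fun _ => eq_zero_of_vecMul_Gblocks_eq_zero hT]
  simp only [Equiv.coe_refl, Gmat_submatrix, ← vecMul_vecMul, vecMul_submatrix_Abar_eq_zero_iff,
    not_exists, not_and, forall_exists_index]
  exact forall_congr' fun x => by tauto

theorem stmt6 (N : ℕ) (hN : 1 ≤ N) (P1 P2 P3 P4 : Matrix (Fin N) (Fin N) ℂ)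
    (hne : P1 ≠ P3)
    (hcond : (P3 - P1)ᴴ * (P3 - P1) = ((frobSq (P3 - P1) / (N : ℝ) : ℝ) : ℂ) • 1) :
    (Gmat P1 P2 P3 P4).rank = 2 * N ↔
      wrow N *
          (P1 * P2 +
            ((N : ℝ) / frobSq (P3 - P1) : ℝ) •
              ((1 - P1) * (P3 - P1)ᴴ * (P3 * P4 - P1 * P2))) ≠
        wrow N := by
  have : NeZero N := ⟨by omega⟩
  have hc : frobSq (P3 - P1) ≠ 0 := (frobSq_pos (sub_ne_zero.mpr hne.symm)).ne'
  have hT : (((N : ℝ) / frobSq (P3 - P1) : ℝ) : ℂ) • (P3 - P1)ᴴ * (P3 - P1) = 1 := by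
    have hN0 : (N : ℝ) ≠ 0 := by positivity
    rw [smul_mul_assoc, hcond, smul_smul, ← Complex.ofReal_mul,
      show (N : ℝ) / frobSq (P3 - P1) * (frobSq (P3 - P1) / N) = 1 by field_simp,
      Complex.ofReal_one, one_smul]
  rw [rank_Gmat_eq_iff hT, show wrow N = replicateRow (Fin 1) 1 from rfl, ← replicateRow_vecMul,
    ne_eq, ne_eq, replicateRow_inj, ← Complex.coe_smul, Matrix.mul_smul, Matrix.smul_mul]

end
end

section
/- Let N ≥ 1 and let S be a set of N×N complex matrices such that every P ∈ S is unitary (P†·P = I_N) and any two distinct A, B ∈ S satisfy (B−A)† · (B−A) = (‖B−A‖_F² / N) · I_N. Then the following are equivalent: (i) for all P1, P2, P3, P4 ∈ S with (P1,P2) ≠ (P3,P4), the matrix G(P1,P2,P3,P4) has rank 2N (full row rank); (ii) for all P̃1, P̃2, P̃3, P̃4 ∈ S with P̃1 ≠ P̃3, w · [P̃1·P̃2 + N·(I_N − P̃1) · ((P̃3−P̃1)† / ‖P̃3−P̃1‖_F²) · (P̃3·P̃4 − P̃1·P̃2)] ≠ w, where w is the 1×N all-ones row vector. -/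
open Matrix

noncomputable section

/- ===================== auxiliary lemmas ===================== -/

lemma aux_rank_eq_iff (m n : ℕ) (A : Matrix (Fin m) (Fin n) ℂ) :
    A.rank = m ↔ ∀ c : Fin m → ℂ, vecMul c A = 0 → c = 0 := by
  rw [← Matrix.rank_transpose, Matrix.rank]
  have hsum := Aᵀ.mulVecLin.finrank_range_add_finrank_ker
  have hdom : Module.finrank ℂ (Fin m → ℂ) = m := by simp
  have happ : ∀ c, Aᵀ.mulVecLin c = vecMul c A := by
    intro c; rw [Matrix.mulVecLin_apply, Matrix.mulVec_transpose]
  constructor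
  · intro h c hc
    have hker : LinearMap.ker Aᵀ.mulVecLin = ⊥ := by
      have : Module.finrank ℂ (LinearMap.ker Aᵀ.mulVecLin) = 0 := by omega
      exact Submodule.finrank_eq_zero.mp this
    exact (LinearMap.ker_eq_bot'.mp hker) c (by rw [happ]; exact hc)
  · intro h
    have hker : LinearMap.ker Aᵀ.mulVecLin = ⊥ := by
      apply LinearMap.ker_eq_bot'.mpr
      intro c hc
      exact h c (by rw [← happ]; exact hc)
    have : Module.finrank ℂ (LinearMap.ker Aᵀ.mulVecLin) = 0 := by
      rw [hker]; simp
    omega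

lemma aux_vecMul_Abar {N : ℕ} (x : Fin (3*N) → ℂ) (j : Fin (3*N-1)) :
    vecMul x (Abar N) j
      = x ⟨j.val+1, by omega⟩ - x ⟨j.val, by omega⟩ := by
  have hj := j.isLt
  have h2 : j.val + 1 < 3*N := by omega
  have h1 : j.val < 3*N := by omega
  have key : ∀ k : Fin (3*N), x k * Abar N k j
      = (if k = (⟨j.val+1, h2⟩ : Fin (3*N)) then x k else 0)
        - (if k = (⟨j.val, h1⟩ : Fin (3*N)) then x k else 0) := by
    intro k
    simp only [Abar, Matrix.of_apply]
    split_ifs with c1 c2 c3 c4 <;> simp_all [Fin.ext_iff]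
  rw [Matrix.vecMul, dotProduct]
  simp only [key]
  rw [Finset.sum_sub_distrib, Finset.sum_ite_eq' Finset.univ, Finset.sum_ite_eq' Finset.univ]
  simp

lemma aux_sum_split {N : ℕ} (f : Fin (2*N) → ℂ) :
    ∑ i, f i = (∑ i : Fin N, f ⟨i.val, by omega⟩) + ∑ i : Fin N, f ⟨N + i.val, by omega⟩ := by
  rw [← Fintype.sum_equiv (finCongr (by omega : N + N = 2*N))
      (fun i => f (finCongr (by omega) i)) f (fun i => rfl)]
  rw [Fin.sum_univ_add]
  congr 1

lemma aux_app_congr {N : ℕ} (X : Matrix (Fin N) (Fin N) ℂ) {i i' : Fin N} {j j' : Fin N}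
    (hi : i.val = i'.val) (hj : j.val = j'.val) : X i j = X i' j' := by
  congr 1 <;> exact Fin.ext ‹_›

section blkLemmas
variable {N : ℕ} (A B C D E F : Matrix (Fin N) (Fin N) ℂ) (c : Fin (2*N) → ℂ)

lemma aux_vecMul_blk23_one (j : Fin N) (h : j.val < 3*N) :
    vecMul c (blk23 A B C D E F) ⟨j.val, h⟩
      = vecMul (fun i : Fin N => c ⟨i.val, by omega⟩) A j
        + vecMul (fun i : Fin N => c ⟨N + i.val, by omega⟩) D j := by
  rw [Matrix.vecMul, dotProduct, aux_sum_split]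
  simp only [Matrix.vecMul, dotProduct, ← Finset.sum_add_distrib]
  refine Finset.sum_congr rfl fun i _ => ?_
  congr 1
  · simp only [blk23, Matrix.of_apply]
    rw [dif_pos i.isLt, dif_pos j.isLt]
  · simp only [blk23, Matrix.of_apply]
    rw [dif_neg (by omega), dif_pos j.isLt]
    congr 1
    refine aux_app_congr D ?_ ?_ <;> simp only [Fin.val_mk] <;> omega

lemma aux_vecMul_blk23_two (j : Fin N) (h : N + j.val < 3*N) :
    vecMul c (blk23 A B C D E F) ⟨N + j.val, h⟩
      = vecMul (fun i : Fin N => c ⟨i.val, by omega⟩) B j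
        + vecMul (fun i : Fin N => c ⟨N + i.val, by omega⟩) E j := by
  have hN : 0 < N := by omega
  rw [Matrix.vecMul, dotProduct, aux_sum_split]
  simp only [Matrix.vecMul, dotProduct, ← Finset.sum_add_distrib]
  refine Finset.sum_congr rfl fun i _ => ?_
  congr 1
  · simp only [blk23, Matrix.of_apply]
    rw [dif_pos i.isLt, dif_neg (by omega), dif_pos (by omega)]
    congr 1
    refine aux_app_congr B ?_ ?_ <;> simp only [Fin.val_mk] <;> omega
  · simp only [blk23, Matrix.of_apply]
    rw [dif_neg (by omega), dif_neg (by omega), dif_pos (by omega)]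
    congr 1
    refine aux_app_congr E ?_ ?_ <;> simp only [Fin.val_mk] <;> omega

lemma aux_vecMul_blk23_three (j : Fin N) (h : 2*N + j.val < 3*N) :
    vecMul c (blk23 A B C D E F) ⟨2*N + j.val, h⟩
      = vecMul (fun i : Fin N => c ⟨i.val, by omega⟩) C j
        + vecMul (fun i : Fin N => c ⟨N + i.val, by omega⟩) F j := by
  have hN : 0 < N := by omega
  rw [Matrix.vecMul, dotProduct, aux_sum_split]
  simp only [Matrix.vecMul, dotProduct, ← Finset.sum_add_distrib]
  refine Finset.sum_congr rfl fun i _ => ?_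
  congr 1
  · simp only [blk23, Matrix.of_apply]
    rw [dif_pos i.isLt, dif_neg (by omega), dif_neg (by omega)]
    congr 1
    refine aux_app_congr C ?_ ?_ <;> simp only [Fin.val_mk] <;> omega
  · simp only [blk23, Matrix.of_apply]
    rw [dif_neg (by omega), dif_neg (by omega), dif_neg (by omega)]
    congr 1
    refine aux_app_congr F ?_ ?_ <;> simp only [Fin.val_mk] <;> omega

end blkLemmas

lemma aux_rowmul_apply {N : ℕ} (x : Matrix (Fin 1) (Fin N) ℂ) (P : Matrix (Fin N) (Fin N) ℂ)
    (j : Fin N) : (x * P) 0 j = vecMul (x 0) P j := by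
  simp [Matrix.mul_apply, Matrix.vecMul, dotProduct]
lemma aux_rank_Gmat_iff {N : ℕ} (hN : 1 ≤ N) (P1 P2 P3 P4 : Matrix (Fin N) (Fin N) ℂ) :
    (Gmat P1 P2 P3 P4).rank = 2*N ↔
      ∀ (a b : Matrix (Fin 1) (Fin N) ℂ) (t : ℂ),
        a + b = t • wrow N → a * P1 + b * P3 = t • wrow N →
        a * (P1 * P2) + b * (P3 * P4) = t • wrow N → a = 0 ∧ b = 0 := by
  rw [aux_rank_eq_iff]
  constructor
  · -- injectivity → no nontrivial relation
    intro h a b t e1 e2 e3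
    set c : Fin (2*N) → ℂ := fun i =>
      if hi : i.val < N then a 0 ⟨i.val, hi⟩ else b 0 ⟨i.val - N, by have := i.isLt; omega⟩ with hc
    have ca : ∀ (pf : ∀ i : Fin N, (i.val : ℕ) < 2*N),
        (fun i : Fin N => c ⟨i.val, pf i⟩) = a 0 := by
      intro pf; funext i
      simp only [hc]
      rw [dif_pos i.isLt]
    have cb : ∀ (pf : ∀ i : Fin N, N + i.val < 2*N),
        (fun i : Fin N => c ⟨N + i.val, pf i⟩) = b 0 := by
      intro pf; funext i
      simp only [hc]
      rw [dif_neg (by omega)]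
      exact congrArg (b 0) (Fin.ext (by simp only [Fin.val_mk]; omega))
    have hx : ∀ j : Fin (3*N),
        vecMul c (blk23 1 P1 (P1 * P2) 1 P3 (P3 * P4)) j = t := by
      intro j
      have hjlt := j.isLt
      rcases lt_or_ge j.val N with h1 | h1
      · have hj : j = ⟨((⟨j.val, h1⟩ : Fin N)).val, by simp only [Fin.val_mk]; omega⟩ :=
          Fin.ext rfl
        rw [hj, aux_vecMul_blk23_one, ca, cb]
        have := congrFun (congrFun e1 0) ⟨j.val, h1⟩
        simpa [wrow, Matrix.add_apply, Matrix.smul_apply, Matrix.vecMul_one] using this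
      rcases lt_or_ge j.val (2*N) with h2 | h2
      · have hj : j = ⟨N + ((⟨j.val - N, by omega⟩ : Fin N)).val, by simp only [Fin.val_mk]; omega⟩ :=
          Fin.ext (by simp only [Fin.val_mk]; omega)
        rw [hj, aux_vecMul_blk23_two, ca, cb]
        have := congrFun (congrFun e2 0) ⟨j.val - N, by omega⟩
        simpa [wrow, Matrix.add_apply, Matrix.smul_apply, aux_rowmul_apply] using this
      · have hj : j = ⟨2*N + ((⟨j.val - 2*N, by omega⟩ : Fin N)).val, by simp only [Fin.val_mk]; omega⟩ :=
          Fin.ext (by simp only [Fin.val_mk]; omega)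
        rw [hj, aux_vecMul_blk23_three, ca, cb]
        have := congrFun (congrFun e3 0) ⟨j.val - 2*N, by omega⟩
        simpa [wrow, Matrix.add_apply, Matrix.smul_apply, aux_rowmul_apply] using this
    have hc0 : c = 0 := by
      apply h
      have : Gmat P1 P2 P3 P4 = blk23 1 P1 (P1 * P2) 1 P3 (P3 * P4) * Abar N := rfl
      rw [this, ← Matrix.vecMul_vecMul]
      funext j
      rw [aux_vecMul_Abar]
      rw [hx, hx]
      simp
    constructor
    · ext i j
      have hi : i = 0 := Subsingleton.elim _ _
      subst hi
      have h1 := congrFun (ca (fun i : Fin N => by omega)) j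
      rw [← h1, hc0]
      simp
    · ext i j
      have hi : i = 0 := Subsingleton.elim _ _
      subst hi
      have h1 := congrFun (cb (fun i : Fin N => by omega)) j
      rw [← h1, hc0]
      simp
  · -- no nontrivial relation → injectivity
    intro h c hcG
    set M := blk23 1 P1 (P1 * P2) 1 P3 (P3 * P4) with hM
    set x := vecMul c M with hxdef
    have hstep : ∀ j : Fin (3*N-1), x ⟨j.val+1, by omega⟩ = x ⟨j.val, by omega⟩ := by
      intro j
      have : vecMul x (Abar N) j = 0 := by
        have : Gmat P1 P2 P3 P4 = M * Abar N := rfl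
        rw [this, ← Matrix.vecMul_vecMul] at hcG
        exact congrFun hcG j
      rw [aux_vecMul_Abar] at this
      exact sub_eq_zero.mp this
    have h3N : 0 < 3*N := by omega
    set t := x ⟨0, h3N⟩ with ht
    have hconst : ∀ j : Fin (3*N), x j = t := by
      have claim : ∀ m (hm : m < 3*N), x ⟨m, hm⟩ = t := by
        intro m
        induction m with
        | zero => intro hm; rfl
        | succ k ih =>
          intro hm
          have hk : k < 3*N-1 := by omega
          have := hstep ⟨k, hk⟩
          simp only [Fin.val_mk] at this
          rw [this]
          exact ih (by omega)
      intro j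
      have : j = ⟨j.val, j.isLt⟩ := Fin.ext rfl
      rw [this]; exact claim j.val j.isLt
    set a : Matrix (Fin 1) (Fin N) ℂ := Matrix.of (fun _ i => c ⟨i.val, by omega⟩) with ha
    set b : Matrix (Fin 1) (Fin N) ℂ := Matrix.of (fun _ i => c ⟨N + i.val, by omega⟩) with hb
    have ca : ∀ (pf : ∀ i : Fin N, (i.val : ℕ) < 2*N),
        (fun i : Fin N => c ⟨i.val, pf i⟩) = a 0 := fun _ => rfl
    have cb : ∀ (pf : ∀ i : Fin N, N + i.val < 2*N),
        (fun i : Fin N => c ⟨N + i.val, pf i⟩) = b 0 := fun _ => rfl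
    have e1 : a + b = t • wrow N := by
      ext i j
      have hi : i = 0 := Subsingleton.elim _ _
      subst hi
      have h1 := hconst ⟨j.val, by omega⟩
      rw [show ((⟨j.val, by omega⟩ : Fin (3*N))) = ⟨((j : Fin N)).val, by omega⟩ from rfl] at h1
      rw [hxdef, hM, aux_vecMul_blk23_one, ca, cb] at h1
      simp only [Matrix.vecMul_one] at h1
      simp only [Matrix.add_apply, Matrix.smul_apply, wrow, Matrix.of_apply, smul_eq_mul, mul_one]
      exact h1
    have e2 : a * P1 + b * P3 = t • wrow N := by
      ext i j
      have hi : i = 0 := Subsingleton.elim _ _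
      subst hi
      have h1 := hconst ⟨N + j.val, by omega⟩
      rw [show ((⟨N + j.val, by omega⟩ : Fin (3*N))) = ⟨N + ((j : Fin N)).val, by omega⟩ from rfl] at h1
      rw [hxdef, hM, aux_vecMul_blk23_two, ca, cb] at h1
      simpa [wrow, Matrix.add_apply, Matrix.smul_apply, aux_rowmul_apply] using h1
    have e3 : a * (P1 * P2) + b * (P3 * P4) = t • wrow N := by
      ext i j
      have hi : i = 0 := Subsingleton.elim _ _
      subst hi
      have h1 := hconst ⟨2*N + j.val, by omega⟩
      rw [show ((⟨2*N + j.val, by omega⟩ : Fin (3*N))) = ⟨2*N + ((j : Fin N)).val, by omega⟩ from rfl] at h1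
      rw [hxdef, hM, aux_vecMul_blk23_three, ca, cb] at h1
      simpa [wrow, Matrix.add_apply, Matrix.smul_apply, aux_rowmul_apply] using h1
    obtain ⟨ha0, hb0⟩ := h a b t e1 e2 e3
    funext i
    rcases lt_or_ge i.val N with hi | hi
    · have : a 0 ⟨i.val, hi⟩ = 0 := by rw [ha0]; rfl
      rw [ha] at this
      simp only [Matrix.of_apply] at this
      rw [show ((⟨(⟨i.val, hi⟩ : Fin N).val, by omega⟩ : Fin (2*N))) = i from Fin.ext rfl] at this
      exact this
    · have : b 0 ⟨i.val - N, by have := i.isLt; omega⟩ = 0 := by rw [hb0]; rfl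
      rw [hb] at this
      simp only [Matrix.of_apply] at this
      rw [show ((⟨N + (⟨i.val - N, by have := i.isLt; omega⟩ : Fin N).val, by have := i.isLt; omega⟩ : Fin (2*N))) = i from
        Fin.ext (by simp only [Fin.val_mk]; omega)] at this
      exact this
lemma aux_frobSq_ne_zero {m n : ℕ} {X : Matrix (Fin m) (Fin n) ℂ} (h : X ≠ 0) :
    frobSq X ≠ 0 := by
  intro h0
  apply h
  ext i j
  have hnn : ∀ i ∈ Finset.univ, (0:ℝ) ≤ ∑ j, Complex.normSq (X i j) :=
    fun i _ => Finset.sum_nonneg fun j _ => Complex.normSq_nonneg _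
  have h1 := (Finset.sum_eq_zero_iff_of_nonneg hnn).mp h0 i (Finset.mem_univ i)
  have h2 := (Finset.sum_eq_zero_iff_of_nonneg
    (fun j _ => Complex.normSq_nonneg (X i j))).mp h1 j (Finset.mem_univ j)
  simpa [Complex.normSq_eq_zero] using h2

lemma aux_real_smul {m n : ℕ} (r : ℝ) (M : Matrix (Fin m) (Fin n) ℂ) :
    r • M = ((r:ℂ)) • M := by
  ext i j
  simp [Matrix.smul_apply, Complex.real_smul]

lemma aux_expand {N : ℕ} (W : Matrix (Fin 1) (Fin N) ℂ) (U V D : Matrix (Fin N) (Fin N) ℂ)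
    (s : ℝ) : W * (U + s • (V * D)) = W * U + (W * ((s:ℂ) • V)) * D := by
  rw [aux_real_smul, Matrix.mul_add, Matrix.mul_smul, Matrix.mul_smul, Matrix.smul_mul,
    Matrix.mul_assoc]

/-- From `Xᴴ * X = ((f/N : ℝ) : ℂ) • 1` with `f ≠ 0`, `N ≠ 0`,
the matrix `((N/f : ℝ) : ℂ) • Xᴴ` is a two-sided inverse of `X`. -/
lemma aux_inv_of_scaled {N : ℕ} (hN : N ≠ 0) {X : Matrix (Fin N) (Fin N) ℂ} {f : ℝ}
    (hf : f ≠ 0) (h : Xᴴ * X = ((f / (N:ℝ) : ℝ) : ℂ) • 1) :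
    ((((N:ℝ) / f : ℝ) : ℂ) • Xᴴ) * X = 1 ∧ X * ((((N:ℝ) / f : ℝ) : ℂ) • Xᴴ) = 1 := by
  have hNr : (N:ℝ) ≠ 0 := Nat.cast_ne_zero.mpr hN
  have h1 : ((((N:ℝ) / f : ℝ) : ℂ) • Xᴴ) * X = 1 := by
    rw [Matrix.smul_mul, h, smul_smul]
    rw [show ((((N:ℝ) / f : ℝ) : ℂ) * ((f / (N:ℝ) : ℝ) : ℂ)) = 1 by
      rw [← Complex.ofReal_mul]
      rw [show ((N:ℝ) / f * (f / (N:ℝ))) = 1 by field_simp]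
      exact Complex.ofReal_one]
    rw [one_smul]
  exact ⟨h1, mul_eq_one_comm.mp h1⟩

lemma aux_wrow_ne_zero {N : ℕ} (hN : 1 ≤ N) : wrow N ≠ 0 := by
  intro h
  have := congrFun (congrFun h 0) ⟨0, hN⟩
  simp [wrow] at this
theorem stmt8 (N : ℕ) (hN : 1 ≤ N) (S : Set (Matrix (Fin N) (Fin N) ℂ))
    (hunit : ∀ P ∈ S, Pᴴ * P = 1)
    (horth : ∀ A ∈ S, ∀ B ∈ S, A ≠ B →
      (B - A)ᴴ * (B - A) = ((frobSq (B - A) / (N : ℝ) : ℝ) : ℂ) • 1) :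
    (∀ P1 ∈ S, ∀ P2 ∈ S, ∀ P3 ∈ S, ∀ P4 ∈ S, (P1, P2) ≠ (P3, P4) →
        (Gmat P1 P2 P3 P4).rank = 2 * N) ↔
      (∀ Q1 ∈ S, ∀ Q2 ∈ S, ∀ Q3 ∈ S, ∀ Q4 ∈ S, Q1 ≠ Q3 →
        wrow N *
            (Q1 * Q2 +
              ((N : ℝ) / frobSq (Q3 - Q1) : ℝ) •
                ((1 - Q1) * (Q3 - Q1)ᴴ * (Q3 * Q4 - Q1 * Q2))) ≠
          wrow N) := by
  have hN0 : N ≠ 0 := by omega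
  constructor
  · -- (i) → (ii)
    intro hi Q1 hQ1 Q2 hQ2 Q3 hQ3 Q4 hQ4 hQ13 heq
    set W := wrow N with hW
    set R := Q3 - Q1 with hRdef
    have hRne : R ≠ 0 := sub_ne_zero.mpr (Ne.symm hQ13)
    have hf : frobSq R ≠ 0 := aux_frobSq_ne_zero hRne
    obtain ⟨hRiR, hRRi⟩ := aux_inv_of_scaled hN0 hf (horth Q1 hQ1 Q3 hQ3 hQ13)
    set Rinv := ((((N:ℝ) / frobSq R : ℝ) : ℂ)) • Rᴴ with hRinv
    set a := W * ((1 - Q1) * Rinv) with ha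
    set b := W - a with hb
    set D := Q3 * Q4 - Q1 * Q2 with hD
    have hstep : a * R = W * (1 - Q1) := by
      calc a * R = W * ((1 - Q1) * Rinv) * R := by rw [ha]
        _ = W * ((1 - Q1) * (Rinv * R)) := by rw [Matrix.mul_assoc, Matrix.mul_assoc]
        _ = W * (1 - Q1) := by rw [hRiR, Matrix.mul_one]
    have hrank := hi Q3 hQ3 Q4 hQ4 Q1 hQ1 Q2 hQ2 (by
      intro hpair
      rw [Prod.mk.injEq] at hpair
      exact hQ13 hpair.1.symm)
    have e1' : a + b = (1:ℂ) • W := by rw [one_smul, hb]; abel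
    have e2' : a * Q3 + b * Q1 = (1:ℂ) • W := by
      have h1 : a * Q3 + b * Q1 = a * R + W * Q1 := by
        rw [hb, hRdef, Matrix.mul_sub, Matrix.sub_mul]
        abel
      rw [one_smul, h1, hstep, Matrix.mul_sub, Matrix.mul_one]
      abel
    have e3' : a * (Q3 * Q4) + b * (Q1 * Q2) = (1:ℂ) • W := by
      rw [aux_expand W (Q1 * Q2) ((1 - Q1) * Rᴴ) D] at heq
      rw [← mul_smul_comm, ← hRinv, ← ha] at heq
      have h1 : a * (Q3 * Q4) + b * (Q1 * Q2) = a * D + W * (Q1 * Q2) := by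
        rw [hb, hD, Matrix.mul_sub, Matrix.sub_mul]
        abel
      rw [one_smul, h1, add_comm]
      exact heq
    obtain ⟨ha0, hb0⟩ := (aux_rank_Gmat_iff hN Q3 Q4 Q1 Q2).mp hrank a b 1 e1' e2' e3'
    have hW0 : W = 0 := by
      have : a + b = W := by rw [hb]; abel
      rw [ha0, hb0] at this
      simpa using this.symm
    exact aux_wrow_ne_zero hN hW0
  · -- (ii) → (i)
    intro hii P1 hP1 P2 hP2 P3 hP3 P4 hP4 hpair
    rw [aux_rank_Gmat_iff hN]
    intro a b t e1 e2 e3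
    set W := wrow N with hW
    by_cases hP : P1 = P3
    · subst hP
      have hP24 : P2 ≠ P4 := fun h => hpair (by rw [h])
      have hPP : P1 * P1ᴴ = 1 := mul_eq_one_comm.mp (hunit P1 hP1)
      set E := P4 - P2 with hEdef
      have hEne : E ≠ 0 := sub_ne_zero.mpr (Ne.symm hP24)
      have hf : frobSq E ≠ 0 := aux_frobSq_ne_zero hEne
      obtain ⟨hEiE, hEEi⟩ := aux_inv_of_scaled hN0 hf (horth P2 hP2 P4 hP4 hP24)
      set Einv := ((((N:ℝ) / frobSq E : ℝ) : ℂ)) • Eᴴ with hEinv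
      by_cases ht : t = 0
      · subst ht
        rw [zero_smul] at e1 e2 e3
        have hb : b = -a := eq_neg_of_add_eq_zero_right e1
        have h3 : a * (P1 * E) = 0 := by
          rw [hb] at e3
          have h4 : a * (P1 * P4) - a * (P1 * P2) = 0 := by
            have h5 := e3
            rw [Matrix.neg_mul, add_neg_eq_zero] at h5
            rw [sub_eq_zero]
            exact h5.symm
          rw [hEdef, Matrix.mul_sub, Matrix.mul_sub]
          exact h4
        have hinv : (P1 * E) * (Einv * P1ᴴ) = 1 := by
          calc (P1 * E) * (Einv * P1ᴴ) = P1 * ((E * Einv) * P1ᴴ) := by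
                rw [Matrix.mul_assoc, Matrix.mul_assoc]
            _ = 1 := by rw [hEEi, Matrix.one_mul, hPP]
        have ha0 : a = 0 := by
          calc a = a * ((P1 * E) * (Einv * P1ᴴ)) := by rw [hinv, Matrix.mul_one]
            _ = (a * (P1 * E)) * (Einv * P1ᴴ) := by simp only [Matrix.mul_assoc]
            _ = 0 := by rw [h3, Matrix.zero_mul]
        exact ⟨ha0, by rw [hb, ha0, neg_zero]⟩
      · exfalso
        have hWP : W * P1 = W := by
          have h1 : t • (W * P1) = t • W := by
            calc t • (W * P1) = (t • W) * P1 := by rw [Matrix.smul_mul]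
              _ = (a + b) * P1 := by rw [e1]
              _ = a * P1 + b * P1 := Matrix.add_mul a b P1
              _ = t • W := e2
          calc W * P1 = t⁻¹ • (t • (W * P1)) := (inv_smul_smul₀ ht _).symm
            _ = t⁻¹ • (t • W) := by rw [h1]
            _ = W := inv_smul_smul₀ ht _
        have hW1 : W * (1 - P1) = 0 := by
          rw [Matrix.mul_sub, Matrix.mul_one, hWP, sub_self]
        have key : ∀ (Q : Matrix (Fin N) (Fin N) ℂ) (s : ℝ) (D' : Matrix (Fin N) (Fin N) ℂ),
            W * (P1 * P1 + s • ((1 - P1) * (Q - P1)ᴴ * D')) = W := by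
          intro Q s D'
          rw [aux_expand W (P1 * P1) ((1 - P1) * (Q - P1)ᴴ) D']
          have h5 : W * ((1 - P1) * (Q - P1)ᴴ) = 0 := by
            rw [← Matrix.mul_assoc, hW1, Matrix.zero_mul]
          rw [Matrix.mul_smul, h5, smul_zero, Matrix.zero_mul, add_zero,
            ← Matrix.mul_assoc, hWP, hWP]
        by_cases hQ : P2 = P1
        · have hQne : P1 ≠ P4 := fun h => hP24 (hQ.symm ▸ h ▸ rfl)
          exact hii P1 hP1 P1 hP1 P4 hP4 P4 hP4 hQne (key P4 _ _)
        · exact hii P1 hP1 P1 hP1 P2 hP2 P2 hP2 (Ne.symm hQ) (key P2 _ _)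
    · -- P1 ≠ P3
      set R := P1 - P3 with hRdef
      have hRne : R ≠ 0 := sub_ne_zero.mpr hP
      have hf : frobSq R ≠ 0 := aux_frobSq_ne_zero hRne
      obtain ⟨hRiR, hRRi⟩ := aux_inv_of_scaled hN0 hf (horth P3 hP3 P1 hP1 (Ne.symm hP))
      set Rinv := ((((N:ℝ) / frobSq R : ℝ) : ℂ)) • Rᴴ with hRinv
      set D := P1 * P2 - P3 * P4 with hD
      have hstep1 : a * R = t • (W - W * P3) := by
        have h1 : a * R + (a + b) * P3 = a * P1 + b * P3 := by
          rw [hRdef, Matrix.mul_sub, Matrix.add_mul]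
          abel
        rw [e1, e2] at h1
        have h2 : a * R = t • W - (t • W) * P3 := eq_sub_of_add_eq h1
        rw [h2, Matrix.smul_mul, ← smul_sub]
      have hstep3 : a * D = t • (W - W * (P3 * P4)) := by
        have h1 : a * D + (a + b) * (P3 * P4) = a * (P1 * P2) + b * (P3 * P4) := by
          rw [hD, Matrix.mul_sub, Matrix.add_mul]
          abel
        rw [e1, e3] at h1
        have h2 : a * D = t • W - (t • W) * (P3 * P4) := eq_sub_of_add_eq h1
        rw [h2, Matrix.smul_mul, ← smul_sub]
      have ha' : a = t • ((W - W * P3) * Rinv) := by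
        calc a = a * (R * Rinv) := by rw [hRRi, Matrix.mul_one]
          _ = (a * R) * Rinv := by rw [Matrix.mul_assoc]
          _ = (t • (W - W * P3)) * Rinv := by rw [hstep1]
          _ = t • ((W - W * P3) * Rinv) := by rw [Matrix.smul_mul]
      by_cases ht : t = 0
      · subst ht
        rw [zero_smul] at ha' e1
        refine ⟨ha', ?_⟩
        have := eq_neg_of_add_eq_zero_right e1
        rw [this, ha', neg_zero]
      · exfalso
        have hXD : ((W - W * P3) * Rinv) * D = W - W * (P3 * P4) := by
          have h1 : t • (((W - W * P3) * Rinv) * D) = t • (W - W * (P3 * P4)) := by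
            calc t • (((W - W * P3) * Rinv) * D) = (t • ((W - W * P3) * Rinv)) * D := by
                  rw [Matrix.smul_mul]
              _ = a * D := by rw [← ha']
              _ = t • (W - W * (P3 * P4)) := hstep3
          calc ((W - W * P3) * Rinv) * D = t⁻¹ • (t • (((W - W * P3) * Rinv) * D)) :=
                (inv_smul_smul₀ ht _).symm
            _ = t⁻¹ • (t • (W - W * (P3 * P4))) := by rw [h1]
            _ = W - W * (P3 * P4) := inv_smul_smul₀ ht _
        apply hii P3 hP3 P4 hP4 P1 hP1 P2 hP2 (Ne.symm hP)
        rw [aux_expand W (P3 * P4) ((1 - P3) * Rᴴ) D]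
        rw [← mul_smul_comm, ← hRinv]
        have h2 : W * ((1 - P3) * Rinv) = (W - W * P3) * Rinv := by
          rw [← Matrix.mul_assoc, Matrix.mul_sub, Matrix.mul_one]
        rw [h2, hXD]
        abel
end
end
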